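/- arXiv:1404.1725 — 3 statements merged into one kernel-verified Lean document; each statement's English description precedes it below -/
import Mathlib

section
/- Let n ≥ 3 be an integer, H a real number, and φ a positive continuously differentiable function on an interval of radii. Along any solution (r, z, σ), defined on an open interval I, of the profile ODE system r'(s) = cos σ(s), z'(s) = sin σ(s), σ'(s) = (n−1)H − (n−2)(φ'(r(s))/φ(r(s))) sin σ(s) (with r(s) in the domain of φ for all s ∈ I), the function J(s) = φ(r(s))^{n−2} sin σ(s) − h(r(s)) is constant on I; that is, J is a first integral of the system. -/
open Set Filter Real

/-- The function `h(x) = (n-1) H ∫₀ˣ φ(u)^(n-2) du` associated to the profile ODE system. -/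
noncomputable def profileH (n : ℕ) (H : ℝ) (φ : ℝ → ℝ) (x : ℝ) : ℝ :=
  ((n : ℝ) - 1) * H * (∫ u in (0:ℝ)..x, φ u ^ (n - 2))

/-!
Write `p = φ ∘ r`. By the chain rule `p' = φ'(r) cos σ`, so in `(p^(n-2) sin σ)'` the derivative
of `p^(n-2)` is cancelled exactly by the term `-(n-2)(φ'(r)/φ(r)) sin σ` of `σ'`. What remains is
`(n-1) H φ(r)^(n-2) cos σ = (n-1) H φ(r)^(n-2) r'`, which by the fundamental theorem of calculus
is `(h ∘ r)'`. Hence `J' = 0` on the interval, and `J` is constant there.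
-/

open Topology

theorem intervalIntegral.hasDerivWithinAt_integral_Icc {E : Type*} [NormedAddCommGroup E]
    [NormedSpace ℝ E] [CompleteSpace E] {f : ℝ → E} {a b x : ℝ}
    (hf : ContinuousOn f (Icc a b)) (hx : x ∈ Icc a b) :
    HasDerivWithinAt (fun u => ∫ t in a..u, f t) (f x) (Icc a b) x := by
  have : Fact (x ∈ Icc a b) := ⟨hx⟩
  have hint : IntervalIntegrable f MeasureTheory.volume a x :=
    (hf.mono (uIcc_of_le hx.1 ▸ Icc_subset_Icc_right hx.2)).intervalIntegrable
  exact integral_hasDerivWithinAt_right hint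
    (hf.stronglyMeasurableAtFilter_nhdsWithin measurableSet_Icc x) (hf x hx)

theorem hasDerivWithinAt_profileH (n : ℕ) (H : ℝ) {b x : ℝ} {φ : ℝ → ℝ}
    (hφ : ContinuousOn φ (Icc 0 b)) (hx : x ∈ Icc 0 b) :
    HasDerivWithinAt (profileH n H φ) (((n : ℝ) - 1) * H * φ x ^ (n - 2)) (Icc 0 b) x :=
  ((intervalIntegral.hasDerivWithinAt_integral_Icc (hφ.pow (n - 2)) hx).const_mul _)

theorem HasDerivAt.pow_mul_sin_of_hasDerivAt_angle {p σ : ℝ → ℝ} {q c u : ℝ} {k : ℕ}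
    (hp : HasDerivAt p (q * Real.cos (σ u)) u) (hpu : p u ≠ 0)
    (hσ : HasDerivAt σ (c - k * (q / p u) * Real.sin (σ u)) u) :
    HasDerivAt (fun s => p s ^ k * Real.sin (σ s)) (c * p u ^ k * Real.cos (σ u)) u := by
  refine ((hp.fun_pow k).fun_mul hσ.sin).congr_deriv ?_
  cases k with
  | zero => simp [mul_comm]
  | succ k =>
    rw [pow_succ, Nat.add_sub_cancel]
    field_simp
    ring

theorem first_integral_of_profile_ODE_general
    (n : ℕ) (hn : 3 ≤ n) (H : ℝ) (b : ℝ)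
    (φ φ' : ℝ → ℝ)
    (hφpos : ∀ x ∈ Icc (0:ℝ) b, 0 < φ x)
    (hφderiv : ∀ x ∈ Icc (0:ℝ) b, HasDerivWithinAt φ (φ' x) (Icc (0:ℝ) b) x)
    (r σ : ℝ → ℝ) (s₁ s₂ : ℝ)
    (hmem : ∀ s ∈ Ioo s₁ s₂, r s ∈ Icc (0:ℝ) b)
    (hr : ∀ s ∈ Ioo s₁ s₂, HasDerivAt r (Real.cos (σ s)) s)
    (hσ : ∀ s ∈ Ioo s₁ s₂, HasDerivAt σ
      (((n : ℝ) - 1) * H - ((n : ℝ) - 2) * (φ' (r s) / φ (r s)) * Real.sin (σ s)) s) :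
    ∀ s ∈ Ioo s₁ s₂, ∀ t ∈ Ioo s₁ s₂,
      φ (r s) ^ (n - 2) * Real.sin (σ s) - profileH n H φ (r s)
        = φ (r t) ^ (n - 2) * Real.sin (σ t) - profileH n H φ (r t) := by
  have hk : ((n - 2 : ℕ) : ℝ) = n - 2 := by norm_num [Nat.cast_sub (by omega : 2 ≤ n)]
  have hφ : ContinuousOn φ (Icc 0 b) := fun x hx => (hφderiv x hx).continuousWithinAt
  have hJ : ∀ s ∈ Ioo s₁ s₂, HasDerivAt
      (fun s => φ (r s) ^ (n - 2) * Real.sin (σ s) - profileH n H φ (r s)) 0 s := by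
    intro s hs
    have hrs : ∀ᶠ t in 𝓝 s, r t ∈ Icc 0 b := eventually_of_mem (Ioo_mem_nhds hs.1 hs.2) hmem
    have hφr := (hφderiv _ (hmem s hs)).comp_hasDerivAt s (hr s hs) hrs
    have hhr := (hasDerivWithinAt_profileH n H hφ (hmem s hs)).comp_hasDerivAt s (hr s hs) hrs
    have hsin := HasDerivAt.pow_mul_sin_of_hasDerivAt_angle (k := n - 2) hφr
      (hφpos _ (hmem s hs)).ne' (hk ▸ hσ s hs)
    exact (hsin.sub hhr).congr_deriv (by simp)
  exact fun s hs t ht => isOpen_Ioo.is_const_of_deriv_eq_zero isPreconnected_Ioo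
    (fun x hx => (hJ x hx).differentiableAt.differentiableWithinAt) (fun x hx => (hJ x hx).deriv)
    hs ht

/-- For an integer `n ≥ 3`, a real number `H`, and a positive continuously
differentiable function `φ` on an interval of radii `[0, b]`, along any solution `(r, z, σ)`
of the profile ODE system
`r' = cos σ`, `z' = sin σ`, `σ' = (n-1)H - (n-2)(φ'(r)/φ(r)) sin σ`
defined on an open interval `(s₁, s₂)` (with `r(s)` in the domain of `φ`), the quantity
`J(s) = φ(r(s))^(n-2) sin σ(s) - h(r(s))` is constant, where
`h(x) = (n-1) H ∫₀ˣ φ(u)^(n-2) du`; that is, `J` is a first integral of the system. -/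
theorem first_integral_of_profile_ODE
    (n : ℕ) (hn : 3 ≤ n) (H : ℝ) (b : ℝ) (hb : 0 < b)
    (φ φ' : ℝ → ℝ)
    (hφpos : ∀ x ∈ Icc (0:ℝ) b, 0 < φ x)
    (hφderiv : ∀ x ∈ Icc (0:ℝ) b, HasDerivWithinAt φ (φ' x) (Icc (0:ℝ) b) x)
    (hφ'cont : ContinuousOn φ' (Icc (0:ℝ) b))
    (r z σ : ℝ → ℝ) (s₁ s₂ : ℝ)
    (hmem : ∀ s ∈ Ioo s₁ s₂, r s ∈ Icc (0:ℝ) b)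
    (hr : ∀ s ∈ Ioo s₁ s₂, HasDerivAt r (Real.cos (σ s)) s)
    (hz : ∀ s ∈ Ioo s₁ s₂, HasDerivAt z (Real.sin (σ s)) s)
    (hσ : ∀ s ∈ Ioo s₁ s₂, HasDerivAt σ
      (((n : ℝ) - 1) * H - ((n : ℝ) - 2) * (φ' (r s) / φ (r s)) * Real.sin (σ s)) s) :
    ∀ s ∈ Ioo s₁ s₂, ∀ t ∈ Ioo s₁ s₂,
      φ (r s) ^ (n - 2) * Real.sin (σ s) - profileH n H φ (r s)
        = φ (r t) ^ (n - 2) * Real.sin (σ t) - profileH n H φ (r t) :=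
  first_integral_of_profile_ODE_general n hn H b φ φ' hφpos hφderiv r σ s₁ s₂ hmem hr hσ
end

section
/- Let n ≥ 3 be an integer, H a real number, and φ a positive continuously differentiable function on an interval of radii. If (r, z, σ) is a solution of the profile ODE system on the interval (s₀ − ε, s₀ + ε), then the reflected triple r̃(s) = r(2s₀ − s), z̃(s) = 2 z(s₀) − z(2s₀ − s), σ̃(s) = π − σ(2s₀ − s) is also a solution of the same system on (s₀ − ε, s₀ + ε). In particular, if σ(s₀) = π/2, then the reflected solution takes at s₀ the same values r(s₀), z(s₀), σ(s₀) as the original one, so a solution with vertical tangent at s₀ extends past s₀ by reflection across the horizontal line z = z(s₀). -/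
open Set Real

/-! Reversing the arclength parameter about `s₀` negates all three derivatives. Reflecting `z` and
`σ` (as `2 z(s₀) - z` and `π - σ`) negates them once more, and since `cos (π - σ) = -cos σ` and
`sin (π - σ) = sin σ`, the right-hand sides of the system are exactly reproduced. At `s₀` the
reflection fixes `r` and `z`, and fixes `σ` precisely when `σ(s₀) = π/2`. -/

lemma two_mul_sub_mem_Ioo {c ε s : ℝ} (hs : s ∈ Ioo (c - ε) (c + ε)) :
    2 * c - s ∈ Ioo (c - ε) (c + ε) :=
  ⟨by linarith [hs.2], by linarith [hs.1]⟩

lemma HasDerivAt.comp_two_mul_sub_of_cos {r : ℝ → ℝ} {θ c s : ℝ}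
    (h : HasDerivAt r (Real.cos θ) (2 * c - s)) :
    HasDerivAt (fun t => r (2 * c - t)) (Real.cos (π - θ)) s := by
  simpa [cos_pi_sub] using h.comp_const_sub (2 * c) s

lemma HasDerivAt.const_sub_comp_two_mul_sub_of_sin {z : ℝ → ℝ} {θ c s : ℝ} (a : ℝ)
    (h : HasDerivAt z (Real.sin θ) (2 * c - s)) :
    HasDerivAt (fun t => a - z (2 * c - t)) (Real.sin (π - θ)) s := by
  simpa [sin_pi_sub] using (h.comp_const_sub (2 * c) s).const_sub a

lemma HasDerivAt.pi_sub_comp_two_mul_sub {σ : ℝ → ℝ} {v c s : ℝ}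
    (h : HasDerivAt σ v (2 * c - s)) :
    HasDerivAt (fun t => π - σ (2 * c - t)) v s := by
  simpa using (h.comp_const_sub (2 * c) s).const_sub π

theorem reflected_solution_of_profile_ODE_general
    (n : ℕ) (H : ℝ) (b : ℝ)
    (φ φ' : ℝ → ℝ)
    (r z σ : ℝ → ℝ) (s₀ ε : ℝ)
    (hmem : ∀ s ∈ Ioo (s₀ - ε) (s₀ + ε), r s ∈ Icc (0:ℝ) b)
    (hr : ∀ s ∈ Ioo (s₀ - ε) (s₀ + ε), HasDerivAt r (Real.cos (σ s)) s)
    (hz : ∀ s ∈ Ioo (s₀ - ε) (s₀ + ε), HasDerivAt z (Real.sin (σ s)) s)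
    (hσ : ∀ s ∈ Ioo (s₀ - ε) (s₀ + ε), HasDerivAt σ
      (((n : ℝ) - 1) * H - ((n : ℝ) - 2) * (φ' (r s) / φ (r s)) * Real.sin (σ s)) s) :
    (∀ s ∈ Ioo (s₀ - ε) (s₀ + ε), r (2 * s₀ - s) ∈ Icc (0:ℝ) b) ∧
    (∀ s ∈ Ioo (s₀ - ε) (s₀ + ε),
      HasDerivAt (fun t => r (2 * s₀ - t)) (Real.cos (π - σ (2 * s₀ - s))) s) ∧
    (∀ s ∈ Ioo (s₀ - ε) (s₀ + ε),
      HasDerivAt (fun t => 2 * z s₀ - z (2 * s₀ - t)) (Real.sin (π - σ (2 * s₀ - s))) s) ∧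
    (∀ s ∈ Ioo (s₀ - ε) (s₀ + ε),
      HasDerivAt (fun t => π - σ (2 * s₀ - t))
        (((n : ℝ) - 1) * H - ((n : ℝ) - 2) * (φ' (r (2 * s₀ - s)) / φ (r (2 * s₀ - s))) *
          Real.sin (π - σ (2 * s₀ - s))) s) ∧
    (σ s₀ = π / 2 →
      r (2 * s₀ - s₀) = r s₀ ∧
      2 * z s₀ - z (2 * s₀ - s₀) = z s₀ ∧
      π - σ (2 * s₀ - s₀) = σ s₀) := by
  refine ⟨fun s hs => hmem _ (two_mul_sub_mem_Ioo hs),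
    fun s hs => (hr _ (two_mul_sub_mem_Ioo hs)).comp_two_mul_sub_of_cos,
    fun s hs => (hz _ (two_mul_sub_mem_Ioo hs)).const_sub_comp_two_mul_sub_of_sin _,
    fun s hs => ?_, fun hvert => ?_⟩
  · rw [sin_pi_sub]
    exact (hσ _ (two_mul_sub_mem_Ioo hs)).pi_sub_comp_two_mul_sub
  · rw [show 2 * s₀ - s₀ = s₀ by ring, hvert]
    exact ⟨rfl, by ring, by ring⟩

/-- For an integer `n ≥ 3`, a real number `H`, and a positive continuously
differentiable function `φ` on an interval of radii `[0, b]`: if `(r, z, σ)` is a solution of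
the profile ODE system
`r' = cos σ`, `z' = sin σ`, `σ' = (n-1)H - (n-2)(φ'(r)/φ(r)) sin σ`
on `(s₀ - ε, s₀ + ε)`, then the reflected triple
`r̃(s) = r(2s₀ - s)`, `z̃(s) = 2 z(s₀) - z(2s₀ - s)`, `σ̃(s) = π - σ(2s₀ - s)`
is also a solution of the same system on `(s₀ - ε, s₀ + ε)`; in particular, if `σ(s₀) = π/2`
then the reflected solution takes at `s₀` the same values `r(s₀)`, `z(s₀)`, `σ(s₀)` as the
original one (so a solution with vertical tangent at `s₀` extends past `s₀` by reflection
across the horizontal line `z = z(s₀)`). -/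
theorem reflected_solution_of_profile_ODE
    (n : ℕ) (hn : 3 ≤ n) (H : ℝ) (b : ℝ) (hb : 0 < b)
    (φ φ' : ℝ → ℝ)
    (hφpos : ∀ x ∈ Icc (0:ℝ) b, 0 < φ x)
    (hφderiv : ∀ x ∈ Icc (0:ℝ) b, HasDerivWithinAt φ (φ' x) (Icc (0:ℝ) b) x)
    (hφ'cont : ContinuousOn φ' (Icc (0:ℝ) b))
    (r z σ : ℝ → ℝ) (s₀ ε : ℝ) (hε : 0 < ε)
    (hmem : ∀ s ∈ Ioo (s₀ - ε) (s₀ + ε), r s ∈ Icc (0:ℝ) b)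
    (hr : ∀ s ∈ Ioo (s₀ - ε) (s₀ + ε), HasDerivAt r (Real.cos (σ s)) s)
    (hz : ∀ s ∈ Ioo (s₀ - ε) (s₀ + ε), HasDerivAt z (Real.sin (σ s)) s)
    (hσ : ∀ s ∈ Ioo (s₀ - ε) (s₀ + ε), HasDerivAt σ
      (((n : ℝ) - 1) * H - ((n : ℝ) - 2) * (φ' (r s) / φ (r s)) * Real.sin (σ s)) s) :
    (∀ s ∈ Ioo (s₀ - ε) (s₀ + ε), r (2 * s₀ - s) ∈ Icc (0:ℝ) b) ∧
    (∀ s ∈ Ioo (s₀ - ε) (s₀ + ε),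
      HasDerivAt (fun t => r (2 * s₀ - t)) (Real.cos (π - σ (2 * s₀ - s))) s) ∧
    (∀ s ∈ Ioo (s₀ - ε) (s₀ + ε),
      HasDerivAt (fun t => 2 * z s₀ - z (2 * s₀ - t)) (Real.sin (π - σ (2 * s₀ - s))) s) ∧
    (∀ s ∈ Ioo (s₀ - ε) (s₀ + ε),
      HasDerivAt (fun t => π - σ (2 * s₀ - t))
        (((n : ℝ) - 1) * H - ((n : ℝ) - 2) * (φ' (r (2 * s₀ - s)) / φ (r (2 * s₀ - s))) *
          Real.sin (π - σ (2 * s₀ - s))) s) ∧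
    (σ s₀ = π / 2 →
      r (2 * s₀ - s₀) = r s₀ ∧
      2 * z s₀ - z (2 * s₀ - s₀) = z s₀ ∧
      π - σ (2 * s₀ - s₀) = σ s₀) :=
  reflected_solution_of_profile_ODE_general n H b φ φ' r z σ s₀ ε hmem hr hz hσ
end

section
/- Let n ≥ 3 be an integer, H a real number, and φ a positive continuously differentiable function on an interval of radii, with h(r) = (n−1)H ∫₀^r φ(u)^{n−2} du. Let (r, z, σ) be a solution of the profile ODE system on an interval I whose first integral vanishes, i.e. φ(r(s))^{n−2} sin σ(s) = h(r(s)) for all s ∈ I, and suppose |h(r(s))| < φ(r(s))^{n−2} for all s ∈ I. Then cos σ(s) ≠ 0 for all s ∈ I; moreover, if cos σ(s₀) > 0 for some s₀ ∈ I, then for every s ∈ I one has r'(s) = √(1 − (h(r(s))/φ(r(s))^{n−2})²) > 0 and z'(s) = h(r(s))/φ(r(s))^{n−2}. In particular r is strictly increasing, so the profile curve is a graph z = z(r) with dz/dr = (h/φ^{n−2})/√(1 − (h/φ^{n−2})²). -/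
open Set Filter Real

/-- Let `n ≥ 3` be an integer, `H` a real number, and `φ` a positive
continuously differentiable function on an interval of radii `[0, b]`, with
`h(r) = (n-1) H ∫₀ʳ φ(u)^(n-2) du`.  Let `(r, z, σ)` be a solution of the profile ODE system
`r' = cos σ`, `z' = sin σ`, `σ' = (n-1)H - (n-2)(φ'(r)/φ(r)) sin σ`
on an interval `I = (s₁, s₂)` whose first integral vanishes, i.e.
`φ(r(s))^(n-2) sin σ(s) = h(r(s))` on `I`, and suppose `|h(r(s))| < φ(r(s))^(n-2)` on `I`.
Then `cos σ(s) ≠ 0` for all `s ∈ I`; moreover, if `cos σ(s₀) > 0` for some `s₀ ∈ I`, then for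
every `s ∈ I` one has `r'(s) = √(1 - (h(r(s))/φ(r(s))^(n-2))²) > 0` and
`z'(s) = h(r(s))/φ(r(s))^(n-2)`; in particular `r` is strictly increasing on `I`
(so the profile curve is a graph `z = z(r)`). -/
theorem zero_flux_solution_is_graph
    (n : ℕ) (hn : 3 ≤ n) (H : ℝ) (b : ℝ) (hb : 0 < b)
    (φ φ' : ℝ → ℝ)
    (hφpos : ∀ x ∈ Icc (0:ℝ) b, 0 < φ x)
    (hφderiv : ∀ x ∈ Icc (0:ℝ) b, HasDerivWithinAt φ (φ' x) (Icc (0:ℝ) b) x)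
    (hφ'cont : ContinuousOn φ' (Icc (0:ℝ) b))
    (r z σ : ℝ → ℝ) (s₁ s₂ : ℝ)
    (hmem : ∀ s ∈ Ioo s₁ s₂, r s ∈ Icc (0:ℝ) b)
    (hr : ∀ s ∈ Ioo s₁ s₂, HasDerivAt r (Real.cos (σ s)) s)
    (hz : ∀ s ∈ Ioo s₁ s₂, HasDerivAt z (Real.sin (σ s)) s)
    (hσ : ∀ s ∈ Ioo s₁ s₂, HasDerivAt σ
      (((n : ℝ) - 1) * H - ((n : ℝ) - 2) * (φ' (r s) / φ (r s)) * Real.sin (σ s)) s)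
    (hJ : ∀ s ∈ Ioo s₁ s₂, φ (r s) ^ (n - 2) * Real.sin (σ s) = profileH n H φ (r s))
    (hlt : ∀ s ∈ Ioo s₁ s₂, |profileH n H φ (r s)| < φ (r s) ^ (n - 2)) :
    (∀ s ∈ Ioo s₁ s₂, Real.cos (σ s) ≠ 0) ∧
    (∀ s₀ ∈ Ioo s₁ s₂, 0 < Real.cos (σ s₀) →
      (∀ s ∈ Ioo s₁ s₂,
        HasDerivAt r (Real.sqrt (1 - (profileH n H φ (r s) / φ (r s) ^ (n - 2)) ^ 2)) s ∧
        0 < Real.sqrt (1 - (profileH n H φ (r s) / φ (r s) ^ (n - 2)) ^ 2) ∧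
        HasDerivAt z (profileH n H φ (r s) / φ (r s) ^ (n - 2)) s) ∧
      StrictMonoOn r (Ioo s₁ s₂)) := by
  have hP : ∀ s ∈ Ioo s₁ s₂, (0:ℝ) < φ (r s) ^ (n - 2) := fun s hs =>
    pow_pos (hφpos _ (hmem s hs)) _
  have hsin : ∀ s ∈ Ioo s₁ s₂,
      Real.sin (σ s) = profileH n H φ (r s) / φ (r s) ^ (n - 2) := by
    intro s hs
    rw [eq_div_iff (hP s hs).ne', mul_comm]
    exact hJ s hs
  have habs : ∀ s ∈ Ioo s₁ s₂, |Real.sin (σ s)| < 1 := by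
    intro s hs
    rw [hsin s hs, abs_div, abs_of_pos (hP s hs), div_lt_one (hP s hs)]
    exact hlt s hs
  have hcossq : ∀ s ∈ Ioo s₁ s₂, 0 < Real.cos (σ s) ^ 2 := by
    intro s hs
    have h1 : Real.sin (σ s) ^ 2 + Real.cos (σ s) ^ 2 = 1 := Real.sin_sq_add_cos_sq _
    have h2 : Real.sin (σ s) ^ 2 < 1 := by
      have := habs s hs
      nlinarith [abs_nonneg (Real.sin (σ s)), sq_abs (Real.sin (σ s))]
    linarith
  have hcosne : ∀ s ∈ Ioo s₁ s₂, Real.cos (σ s) ≠ 0 := by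
    intro s hs hc
    have := hcossq s hs
    rw [hc] at this
    simp at this
  refine ⟨hcosne, fun s₀ hs₀ hpos => ?_⟩
  -- continuity of cos ∘ σ on the interval
  have hcont : ContinuousOn (fun t => Real.cos (σ t)) (Ioo s₁ s₂) := by
    intro t ht
    exact (Real.continuous_cos.continuousAt.comp (hσ t ht).continuousAt).continuousWithinAt
  have hcospos : ∀ s ∈ Ioo s₁ s₂, 0 < Real.cos (σ s) := by
    intro s hs
    rcases lt_or_gt_of_ne (hcosne s hs) with hneg | hpos'
    · exfalso
      have hsub : uIcc s₀ s ⊆ Ioo s₁ s₂ := by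
        exact (ordConnected_Ioo).uIcc_subset hs₀ hs
      have h0 : (0:ℝ) ∈ uIcc (Real.cos (σ s₀)) (Real.cos (σ s)) := by
        rw [mem_uIcc]
        right
        exact ⟨hneg.le, hpos.le⟩
      obtain ⟨t, htm, ht0⟩ := intermediate_value_uIcc (hcont.mono hsub) h0
      exact hcosne t (hsub htm) ht0
    · exact hpos'
  have hkey : ∀ s ∈ Ioo s₁ s₂,
      Real.sqrt (1 - (profileH n H φ (r s) / φ (r s) ^ (n - 2)) ^ 2) = Real.cos (σ s) := by
    intro s hs
    rw [← hsin s hs]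
    have h1 : 1 - Real.sin (σ s) ^ 2 = Real.cos (σ s) ^ 2 := by
      have := Real.sin_sq_add_cos_sq (σ s); linarith
    rw [h1, Real.sqrt_sq (hcospos s hs).le]
  refine ⟨fun s hs => ⟨?_, ?_, ?_⟩, ?_⟩
  · rw [hkey s hs]; exact hr s hs
  · rw [hkey s hs]; exact hcospos s hs
  · rw [← hsin s hs]; exact hz s hs
  · apply strictMonoOn_of_deriv_pos (convex_Ioo s₁ s₂)
    · intro t ht
      exact (hr t ht).continuousAt.continuousWithinAt
    · intro t ht
      rw [interior_Ioo] at ht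
      rw [(hr t ht).deriv]
      exact hcospos t ht
end
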